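/- Let T ∈ B(H) be expansive satisfying T*²T² - 3T*T + 3I - L_T* L_T - P_{ker T*} ≤ 0, where P_{ker T*} is the orthogonal projection onto ker T* and L_T = (T*T)⁻¹T*. Then T is 3-concave, i.e., β₃(T) = T*³T³ - 3T*²T² + 3T*T - I ≤ 0. -/

import Mathlib

open ContinuousLinearMap

/-! Conjugating the operator in the hypothesis by `T` gives exactly `β₃(T)`: from
`L_T T = I` we get `T* L_T* L_T T = I`, and `T* P = 0` because `P` maps into `ker T*`.
Expansivity means `T*T ≥ I`, so `T*T` is invertible and `L_T` is a genuine left inverse.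
Positivity is preserved by `A ↦ T* A T`. -/

/-- The `r`-th defect operator `β_r(T) = Σ_{j=0}^{r} (r choose j)(-1)^{r-j} T*^j T^j`. -/
noncomputable def defectOp {H : Type*} [NormedAddCommGroup H] [InnerProductSpace ℂ H]
    [CompleteSpace H] (r : ℕ) (T : H →L[ℂ] H) : H →L[ℂ] H :=
  ∑ j ∈ Finset.range (r + 1),
    (((-1 : ℂ) ^ (r - j)) * (r.choose j : ℂ)) • ((adjoint T) ^ j * T ^ j)

/-- The canonical left inverse `L_T = (T*T)⁻¹ T*` of a left invertible operator `T`. -/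
noncomputable def leftInv {H : Type*} [NormedAddCommGroup H] [InnerProductSpace ℂ H]
    [CompleteSpace H] (T : H →L[ℂ] H) : H →L[ℂ] H :=
  Ring.inverse (adjoint T * T) * adjoint T

section

variable {H : Type*} [NormedAddCommGroup H] [InnerProductSpace ℂ H] [CompleteSpace H]

lemma one_le_adjoint_mul_self_of_le_norm {T : H →L[ℂ] H} (hexp : ∀ x : H, ‖x‖ ≤ ‖T x‖) :
    1 ≤ adjoint T * T := by
  rw [le_def, isPositive_def']
  refine ⟨?_, fun x => ?_⟩
  · exact (star_eq_adjoint T ▸ IsSelfAdjoint.star_mul_self T).sub (IsSelfAdjoint.one _)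
  have hTx : ‖x‖ ^ 2 ≤ ‖T x‖ ^ 2 := pow_le_pow_left₀ (norm_nonneg x) (hexp x) 2
  simp only [reApplyInnerSelf, sub_apply, one_apply_eq_self, inner_sub_left, mul_apply_eq_comp,
    adjoint_inner_left, inner_self_eq_norm_sq_to_K, map_sub, sub_nonneg]
  exact_mod_cast hTx

lemma isUnit_adjoint_mul_self_of_le_norm {T : H →L[ℂ] H} (hexp : ∀ x : H, ‖x‖ ≤ ‖T x‖) :
    IsUnit (adjoint T * T) :=
  CStarAlgebra.isUnit_of_le 1 (one_le_adjoint_mul_self_of_le_norm hexp) isStrictlyPositive_one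

lemma leftInv_mul_self {T : H →L[ℂ] H} (hT : IsUnit (adjoint T * T)) : leftInv T * T = 1 := by
  rw [leftInv, mul_assoc, Ring.inverse_mul_cancel _ hT]

lemma adjoint_mul_adjoint_leftInv {T : H →L[ℂ] H} (hT : IsUnit (adjoint T * T)) :
    adjoint T * adjoint (leftInv T) = 1 := by
  simpa [star_mul, star_eq_adjoint] using congrArg star (leftInv_mul_self hT)

lemma adjoint_mul_eq_zero_of_range_le_ker {T P : H →L[ℂ] H}
    (hP : LinearMap.range (P : H →ₗ[ℂ] H) ≤ LinearMap.ker ((adjoint T : H →L[ℂ] H) : H →ₗ[ℂ] H)) :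
    adjoint T * P = 0 := by
  have h := LinearMap.range_le_ker_iff.mp hP
  ext x
  exact LinearMap.congr_fun h x

lemma defectOp_three (T : H →L[ℂ] H) :
    defectOp 3 T = adjoint T ^ 3 * T ^ 3 - (3 : ℂ) • (adjoint T ^ 2 * T ^ 2)
      + (3 : ℂ) • (adjoint T * T) - 1 := by
  simp only [defectOp, Finset.sum_range_succ, Finset.sum_range_zero]
  norm_num
  module

lemma adjoint_mul_mul_self_eq_defectOp_three {T P : H →L[ℂ] H} (hT : IsUnit (adjoint T * T))
    (hTP : adjoint T * P = 0) :
    adjoint T * (adjoint T ^ 2 * T ^ 2 - (3 : ℂ) • (adjoint T * T)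
      + (3 : ℂ) • (1 : H →L[ℂ] H) - adjoint (leftInv T) * leftInv T - P) * T
      = defectOp 3 T := by
  have hL : adjoint T * (adjoint (leftInv T) * leftInv T) * T = 1 := by
    rw [← mul_assoc, adjoint_mul_adjoint_leftInv hT, one_mul, leftInv_mul_self hT]
  simp only [mul_sub, sub_mul, mul_add, add_mul, mul_smul_comm, smul_mul_assoc, mul_one, hL,
    hTP, zero_mul, defectOp_three]
  simp only [pow_succ, pow_zero, one_mul, mul_assoc]
  module

end

theorem shimorin_three_concave_general {H : Type*} [NormedAddCommGroup H]
    [InnerProductSpace ℂ H] [CompleteSpace H] (T : H →L[ℂ] H)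
    (hexp : ∀ x : H, ‖x‖ ≤ ‖T x‖)
    (P : H →L[ℂ] H)
    (hP3 : LinearMap.range (P : H →ₗ[ℂ] H) = LinearMap.ker ((adjoint T : H →L[ℂ] H) : H →ₗ[ℂ] H))
    (hineq : (-((adjoint T) ^ 2 * T ^ 2 - (3 : ℂ) • (adjoint T * T)
        + (3 : ℂ) • (1 : H →L[ℂ] H) - adjoint (leftInv T) * leftInv T - P)).IsPositive) :
    (-(defectOp 3 T)).IsPositive := by
  have hconj := adjoint_mul_mul_self_eq_defectOp_three (isUnit_adjoint_mul_self_of_le_norm hexp)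
    (adjoint_mul_eq_zero_of_range_le_ker hP3.le)
  rw [← hconj, ← neg_mul, ← mul_neg]
  exact hineq.adjoint_conj T

/-- (Shimorin) If `T` is expansive and satisfies
`T*²T² - 3T*T + 3I - L_T* L_T - P_{ker T*} ≤ 0`, where `P_{ker T*}` is the orthogonal
projection onto `ker T*` and `L_T = (T*T)⁻¹T*`, then `T` is 3-concave:
`β₃(T) = T*³T³ - 3T*²T² + 3T*T - I ≤ 0`. -/
theorem shimorin_three_concave {H : Type*} [NormedAddCommGroup H]
    [InnerProductSpace ℂ H] [CompleteSpace H] (T : H →L[ℂ] H)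
    (hexp : ∀ x : H, ‖x‖ ≤ ‖T x‖)
    (P : H →L[ℂ] H) (hP1 : P * P = P) (hP2 : IsSelfAdjoint P)
    (hP3 : LinearMap.range (P : H →ₗ[ℂ] H) = LinearMap.ker ((adjoint T : H →L[ℂ] H) : H →ₗ[ℂ] H))
    (hineq : (-((adjoint T) ^ 2 * T ^ 2 - (3 : ℂ) • (adjoint T * T)
        + (3 : ℂ) • (1 : H →L[ℂ] H) - adjoint (leftInv T) * leftInv T - P)).IsPositive) :
    (-(defectOp 3 T)).IsPositive :=
  shimorin_three_concave_general T hexp P hP3 hineq
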